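/- arXiv:2301.09752 — 6 statements merged into one kernel-verified Lean document; each statement's English description precedes it below -/
import Mathlib

section
/- Let f be a two-interval PAM given by rationals a1, b1, a2, b2, c that maps [0,1) ∩ ℚ into [0,1) ∩ ℚ, is injective on [0,1) ∩ ℚ, satisfies the twist condition, and suppose a2 < 0 and a2 + b2 < c < a2*c + b2 (the cutpoint c lies in the interior of f([c,1))). Set c' = (c − b2)/a2 and define g : ℚ → ℚ by g(x) = a2*x + b2 for c ≤ x ≤ c', g(x) = a1*(a2*x + b2) + b1 for c' < x < 1, and g(x) = 0 otherwise. Then: (i) g maps [c,1) ∩ ℚ into [c,1) ∩ ℚ, and (ii) for all x0, t ∈ [c,1) ∩ ℚ, there exists n : ℕ with f^[n] x0 = t if and only if there exists m : ℕ with g^[m] x0 = t. -/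
/-- The two-interval piecewise affine map on `[0,1) ∩ ℚ` given by rationals
`a1, b1, a2, b2, c`. -/
def pam2 (a1 b1 a2 b2 c : ℚ) (x : ℚ) : ℚ :=
  if 0 ≤ x ∧ x < c then a1 * x + b1
  else if c ≤ x ∧ x < 1 then a2 * x + b2
  else 0

/-- The auxiliary map `g` of Lemma 4: with `c' = (c - b2)/a2`,
`g(x) = f₂(x)` on `[c, c']`, `g(x) = f₁(f₂(x))` on `(c', 1)`, and `0` otherwise. -/
def gAux (a1 b1 a2 b2 c : ℚ) (x : ℚ) : ℚ :=
  if c ≤ x ∧ x ≤ (c - b2) / a2 then a2 * x + b2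
  else if (c - b2) / a2 < x ∧ x < 1 then a1 * (a2 * x + b2) + b1
  else 0

/-! `g` is the first-return map of `f` to `[c, 1)`: a point of `[c, c']` is sent back into
`[c, 1)` by one step of `f`, while a point of `(c', 1)` first falls into `[0, c)` and is brought
back by the next step, because the twist condition puts `f(f x)` above `f c' = c`. A first-return
map to `S` has, on `S`, exactly the orbit of `f` with the visits outside `S` deleted, so the two maps
reach the same points of `S`. -/

section FirstReturn

variable {α : Type*}

def IsFirstReturn (f : α → α) (S : Set α) (x y : α) : Prop :=
  ∃ k, 0 < k ∧ f^[k] x = y ∧ y ∈ S ∧ ∀ j, 0 < j → j < k → f^[j] x ∉ S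

variable {f g : α → α} {S : Set α} {x : α}

theorem IsFirstReturn.mem {y : α} (h : IsFirstReturn f S x y) : y ∈ S :=
  h.choose_spec.2.2.1

theorem isFirstReturn_apply (h : f x ∈ S) : IsFirstReturn f S x (f x) :=
  ⟨1, one_pos, rfl, h, fun _ hj0 hj1 => absurd hj1 (by omega)⟩

theorem isFirstReturn_apply_apply (h₁ : f x ∉ S) (h₂ : f (f x) ∈ S) :
    IsFirstReturn f S x (f (f x)) := by
  refine ⟨2, two_pos, rfl, h₂, fun j hj0 hj2 => ?_⟩
  obtain rfl : j = 1 := by omega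
  exact h₁

theorem exists_iterate_eq_of_isFirstReturn (hg : ∀ x ∈ S, IsFirstReturn f S x (g x))
    {t : α} (ht : t ∈ S) (n : ℕ) (hx : x ∈ S) (hn : f^[n] x = t) : ∃ m, g^[m] x = t := by
  induction n using Nat.strong_induction_on generalizing x with
  | _ n ih =>
    rcases Nat.eq_zero_or_pos n with rfl | hn0
    · exact ⟨0, hn⟩
    obtain ⟨k, hk0, hkx, hgx, hgap⟩ := hg x hx
    have hkn : k ≤ n := by
      by_contra! hnk
      exact hgap n hn0 hnk (hn ▸ ht)
    have hrest : f^[n - k] (g x) = t := by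
      rw [← hkx, ← Function.iterate_add_apply, Nat.sub_add_cancel hkn, hn]
    obtain ⟨m, hm⟩ := ih (n - k) (by omega) hgx hrest
    exact ⟨m + 1, by rwa [Function.iterate_succ_apply]⟩

theorem exists_iterate_eq_iterate_of_isFirstReturn (hg : ∀ x ∈ S, IsFirstReturn f S x (g x))
    (m : ℕ) (hx : x ∈ S) : ∃ n, f^[n] x = g^[m] x := by
  induction m generalizing x with
  | zero => exact ⟨0, rfl⟩
  | succ m ih =>
    obtain ⟨k, -, hkx, hgx, -⟩ := hg x hx
    obtain ⟨n, hn⟩ := ih hgx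
    exact ⟨n + k, by rw [Function.iterate_add_apply, hkx, hn, Function.iterate_succ_apply]⟩

theorem exists_iterate_eq_iff_of_isFirstReturn (hg : ∀ x ∈ S, IsFirstReturn f S x (g x))
    {t : α} (hx : x ∈ S) (ht : t ∈ S) : (∃ n, f^[n] x = t) ↔ ∃ m, g^[m] x = t := by
  constructor
  · rintro ⟨n, hn⟩
    exact exists_iterate_eq_of_isFirstReturn hg ht n hx hn
  · rintro ⟨m, rfl⟩
    exact exists_iterate_eq_iterate_of_isFirstReturn hg m hx

end FirstReturn

section TwoIntervalPAM

variable {a1 b1 a2 b2 c x : ℚ}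

theorem pam2_of_lt (hx0 : 0 ≤ x) (hxc : x < c) : pam2 a1 b1 a2 b2 c x = a1 * x + b1 := by
  simp [pam2, hx0, hxc]

theorem pam2_of_le (hcx : c ≤ x) (hx1 : x < 1) : pam2 a1 b1 a2 b2 c x = a2 * x + b2 := by
  simp [pam2, hcx, hx1, not_lt.mpr hcx]

theorem gAux_of_le (hcx : c ≤ x) (hxc' : x ≤ (c - b2) / a2) :
    gAux a1 b1 a2 b2 c x = a2 * x + b2 := by
  simp [gAux, hcx, hxc']

theorem gAux_of_lt (hc'x : (c - b2) / a2 < x) (hx1 : x < 1) :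
    gAux a1 b1 a2 b2 c x = a1 * (a2 * x + b2) + b1 := by
  simp [gAux, hc'x, hx1, not_le.mpr hc'x]

theorem isFirstReturn_gAux (hc0 : 0 < c) (hc1 : c < 1)
    (hmap : ∀ x ∈ Set.Ico (0 : ℚ) 1, pam2 a1 b1 a2 b2 c x ∈ Set.Ico (0 : ℚ) 1)
    (htwist : ∀ x ∈ Set.Ico c 1, ∀ y ∈ Set.Ico (0 : ℚ) c,
      pam2 a1 b1 a2 b2 c x < pam2 a1 b1 a2 b2 c y)
    (ha2 : a2 < 0) (hcut1 : a2 + b2 < c) (hcut2 : c < a2 * c + b2)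
    (hx : x ∈ Set.Ico c 1) :
    IsFirstReturn (pam2 a1 b1 a2 b2 c) (Set.Ico c 1) x (gAux a1 b1 a2 b2 c x) := by
  set c' := (c - b2) / a2 with hc'
  have hfc' : a2 * c' + b2 = c := by rw [hc', mul_div_cancel₀ _ ha2.ne]; ring
  have hcc' : c < c' := by rw [hc', lt_div_iff_of_neg ha2]; linarith
  have hc'1 : c' < 1 := by rw [hc', div_lt_iff_of_neg ha2]; linarith
  have hfx : pam2 a1 b1 a2 b2 c x = a2 * x + b2 := pam2_of_le hx.1 hx.2
  have hfx_mem := hmap x ⟨hc0.le.trans hx.1, hx.2⟩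
  rw [hfx] at hfx_mem
  rcases le_or_gt x c' with hxc' | hc'x
  · rw [gAux_of_le hx.1 hxc', ← hfx]
    refine isFirstReturn_apply ⟨?_, hfx ▸ hfx_mem.2⟩
    rw [hfx]
    nlinarith
  · have hfx_lt : a2 * x + b2 < c := by nlinarith
    have hfx_left : pam2 a1 b1 a2 b2 c x ∈ Set.Ico (0 : ℚ) c := hfx ▸ ⟨hfx_mem.1, hfx_lt⟩
    have hffx : pam2 a1 b1 a2 b2 c (pam2 a1 b1 a2 b2 c x) = a1 * (a2 * x + b2) + b1 := by
      rw [hfx, pam2_of_lt hfx_mem.1 hfx_lt]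
    rw [gAux_of_lt hc'x hx.2, ← hffx]
    refine isFirstReturn_apply_apply (fun h => absurd h.1 (not_le.mpr hfx_left.2)) ⟨?_, ?_⟩
    · have := htwist c' ⟨hcc'.le, hc'1⟩ _ hfx_left
      rw [pam2_of_le hcc'.le hc'1, hfc'] at this
      exact this.le
    · exact (hmap _ ⟨hfx_left.1, hfx_left.2.trans hc1⟩).2

end TwoIntervalPAM

theorem pam_reduction_to_gAux_general (a1 b1 a2 b2 c : ℚ)
    (hc0 : 0 < c) (hc1 : c < 1)
    (hmap : ∀ x ∈ Set.Ico (0 : ℚ) 1, pam2 a1 b1 a2 b2 c x ∈ Set.Ico (0 : ℚ) 1)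
    (htwist : ∀ x ∈ Set.Ico c 1, ∀ y ∈ Set.Ico (0 : ℚ) c,
      pam2 a1 b1 a2 b2 c x < pam2 a1 b1 a2 b2 c y)
    (ha2 : a2 < 0)
    (hcut1 : a2 + b2 < c) (hcut2 : c < a2 * c + b2) :
    (∀ x ∈ Set.Ico c 1, gAux a1 b1 a2 b2 c x ∈ Set.Ico c 1) ∧
    (∀ x0 ∈ Set.Ico c 1, ∀ t ∈ Set.Ico c 1,
      ((∃ n : ℕ, (pam2 a1 b1 a2 b2 c)^[n] x0 = t) ↔
        (∃ m : ℕ, (gAux a1 b1 a2 b2 c)^[m] x0 = t))) := by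
  have hg : ∀ x ∈ Set.Ico c 1,
      IsFirstReturn (pam2 a1 b1 a2 b2 c) (Set.Ico c 1) x (gAux a1 b1 a2 b2 c x) :=
    fun x hx => isFirstReturn_gAux hc0 hc1 hmap htwist ha2 hcut1 hcut2 hx
  exact ⟨fun x hx => (hg x hx).mem,
    fun x0 hx0 t ht => exists_iterate_eq_iff_of_isFirstReturn hg hx0 ht⟩

/-- Reachability questions for `f` on `[c,1)` reduce to reachability questions for
the auxiliary map `g`, which maps `[c,1) ∩ ℚ` into itself. -/
theorem pam_reduction_to_gAux (a1 b1 a2 b2 c : ℚ)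
    (hc0 : 0 < c) (hc1 : c < 1)
    (hmap : ∀ x ∈ Set.Ico (0 : ℚ) 1, pam2 a1 b1 a2 b2 c x ∈ Set.Ico (0 : ℚ) 1)
    (hinj : Set.InjOn (pam2 a1 b1 a2 b2 c) (Set.Ico (0 : ℚ) 1))
    (htwist : ∀ x ∈ Set.Ico c 1, ∀ y ∈ Set.Ico (0 : ℚ) c,
      pam2 a1 b1 a2 b2 c x < pam2 a1 b1 a2 b2 c y)
    (ha2 : a2 < 0)
    (hcut1 : a2 + b2 < c) (hcut2 : c < a2 * c + b2) :
    (∀ x ∈ Set.Ico c 1, gAux a1 b1 a2 b2 c x ∈ Set.Ico c 1) ∧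
    (∀ x0 ∈ Set.Ico c 1, ∀ t ∈ Set.Ico c 1,
      ((∃ n : ℕ, (pam2 a1 b1 a2 b2 c)^[n] x0 = t) ↔
        (∃ m : ℕ, (gAux a1 b1 a2 b2 c)^[m] x0 = t))) :=
  pam_reduction_to_gAux_general a1 b1 a2 b2 c hc0 hc1 hmap htwist ha2 hcut1 hcut2
end

section
/- Let c, d be rationals in (0,1) with c + d < 1, let f be the bijective two-interval PAM determined by c and d (viewed as a map ℝ → ℝ), let α = (1−c−d)/(c·d), h(x) = Real.log (α·x + 1) / Real.log (α + 1), and τ = h(d). Then for every x ∈ [0,1), h (f x) = Int.fract (h x + τ); that is, f is topologically conjugate via h to the rotation of ℝ/ℤ by τ. -/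
/-!
Writing `φ(x) = α x + 1`, the choice of `α` is exactly what makes `φ(c) φ(d) = φ(1)`, and on
each of its two branches the PAM acts on `φ` multiplicatively: `φ(f x) = φ(x) φ(d)` on `[0, c)`
and `φ(f x) = φ(x) φ(d) / φ(1)` on `[c, 1)`. Since `h = log_{φ(1)} ∘ φ`, this becomes
`h(f x) = h(x) + τ` resp. `h(x) + τ - 1`, and `h(c) + τ = 1` decides which of the two is the
fractional part.
-/

/-- The bijective two-interval PAM determined by `c, d ∈ (0,1)`, as a map `ℝ → ℝ`:
it sends `[0,c)` onto `[d,1)` and `[c,1)` onto `[0,d)`. -/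
noncomputable def bpamR (c d : ℝ) (x : ℝ) : ℝ :=
  if 0 ≤ x ∧ x < c then (1 - d) / c * x + d
  else if c ≤ x ∧ x < 1 then d / (1 - c) * x - c * d / (1 - c)
  else 0

/-- The conjugating homeomorphism `h(x) = log (α x + 1) / log (α + 1)`. -/
noncomputable def hFun (α x : ℝ) : ℝ := Real.log (α * x + 1) / Real.log (α + 1)

open Real Set

section hFun

variable {α x y z : ℝ}

theorem hFun_eq_logb (α x : ℝ) : hFun α x = logb (α + 1) (α * x + 1) := rfl

@[simp]
theorem hFun_zero (α : ℝ) : hFun α 0 = 0 := by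
  simp [hFun_eq_logb]

theorem hFun_one (hα : 0 < α) : hFun α 1 = 1 := by
  rw [hFun_eq_logb, mul_one, logb_self_eq_one (by linarith)]

theorem hFun_strictMonoOn (hα : 0 < α) : StrictMonoOn (hFun α) (Ici 0) :=
  fun x hx y _ hxy ↦ logb_lt_logb (by linarith) (by nlinarith [mem_Ici.1 hx])
    (by nlinarith)

theorem hFun_of_mul (hα : 0 < α) (hx : 0 ≤ x) (hz : 0 ≤ z)
    (h : α * y + 1 = (α * x + 1) * (α * z + 1)) : hFun α y = hFun α x + hFun α z := by
  simp only [hFun_eq_logb, h]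
  exact logb_mul (by positivity) (by positivity)

theorem hFun_of_mul_div (hα : 0 < α) (hx : 0 ≤ x) (hz : 0 ≤ z)
    (h : α * y + 1 = (α * x + 1) * (α * z + 1) / (α + 1)) :
    hFun α y = hFun α x + hFun α z - 1 := by
  rw [hFun_eq_logb, h, logb_div (by positivity) (by positivity),
    logb_self_eq_one (by linarith), logb_mul (by positivity) (by positivity)]
  rfl

end hFun

section bpamR

variable {c d x : ℝ}

theorem bpamR_of_lt (hx : 0 ≤ x) (hxc : x < c) : bpamR c d x = (1 - d) / c * x + d := by
  simp [bpamR, hx, hxc]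

theorem bpamR_of_le (hcx : c ≤ x) (hx : x < 1) :
    bpamR c d x = d / (1 - c) * x - c * d / (1 - c) := by
  simp [bpamR, hcx, hx, not_lt.2 hcx]

noncomputable def pamAlpha (c d : ℝ) : ℝ := (1 - c - d) / (c * d)

theorem pamAlpha_pos (hc : 0 < c) (hd : 0 < d) (hcd : c + d < 1) : 0 < pamAlpha c d :=
  div_pos (by linarith) (mul_pos hc hd)

theorem pamAlpha_mul_add_one_mul (hc : c ≠ 0) (hd : d ≠ 0) :
    (pamAlpha c d * c + 1) * (pamAlpha c d * d + 1) = pamAlpha c d + 1 := by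
  unfold pamAlpha
  field_simp
  ring

theorem pamAlpha_mul_bpamR_of_lt (hc : c ≠ 0) (hd : d ≠ 0) (hx : 0 ≤ x) (hxc : x < c) :
    pamAlpha c d * bpamR c d x + 1 = (pamAlpha c d * x + 1) * (pamAlpha c d * d + 1) := by
  rw [bpamR_of_lt hx hxc, pamAlpha]
  field_simp
  ring

variable (hc : 0 < c) (hd : 0 < d) (hcd : c + d < 1)
include hc hd hcd

theorem hFun_add_hFun_eq_one : hFun (pamAlpha c d) c + hFun (pamAlpha c d) d = 1 := by
  rw [← hFun_one (pamAlpha_pos hc hd hcd)]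
  exact (hFun_of_mul (pamAlpha_pos hc hd hcd) hc.le hd.le
    (by rw [pamAlpha_mul_add_one_mul hc.ne' hd.ne', mul_one])).symm

theorem pamAlpha_mul_bpamR_of_le (hcx : c ≤ x) (hx : x < 1) :
    pamAlpha c d * bpamR c d x + 1 =
      (pamAlpha c d * x + 1) * (pamAlpha c d * d + 1) / (pamAlpha c d + 1) := by
  have hα := pamAlpha_pos hc hd hcd
  rw [eq_div_iff (by positivity), bpamR_of_le hcx hx, pamAlpha]
  have : 1 - c ≠ 0 := by linarith
  field_simp
  ring

theorem hFun_bpamR (hx : x ∈ Ico 0 1) :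
    hFun (pamAlpha c d) (bpamR c d x) =
      Int.fract (hFun (pamAlpha c d) x + hFun (pamAlpha c d) d) := by
  set h := hFun (pamAlpha c d)
  have hα := pamAlpha_pos hc hd hcd
  have hmono := hFun_strictMonoOn hα
  have hsum := hFun_add_hFun_eq_one hc hd hcd
  obtain ⟨hx0, hx1⟩ := hx
  rcases lt_or_ge x c with hxc | hcx
  · have hfx : h (bpamR c d x) = h x + h d :=
      hFun_of_mul hα hx0 hd.le (pamAlpha_mul_bpamR_of_lt hc.ne' hd.ne' hx0 hxc)
    have h0x : 0 ≤ h x := hFun_zero (pamAlpha c d) ▸ hmono.monotoneOn self_mem_Ici hx0 hx0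
    have h0d : 0 ≤ h d := hFun_zero (pamAlpha c d) ▸ hmono.monotoneOn self_mem_Ici hd.le hd.le
    have hxc' : h x < h c := hmono hx0 hc.le hxc
    rw [hfx, Int.fract_eq_self.2 ⟨by linarith, by linarith⟩]
  · have hfx : h (bpamR c d x) = h x + h d - 1 :=
      hFun_of_mul_div hα (hc.le.trans hcx) hd.le
        (pamAlpha_mul_bpamR_of_le hc hd hcd hcx hx1)
    have hcx' : h c ≤ h x := hmono.monotoneOn hc.le (hc.le.trans hcx) hcx
    have hx1' : h x < 1 := hFun_one hα ▸ hmono (hc.le.trans hcx) (mem_Ici.2 zero_le_one) hx1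
    have hd1' : h d < 1 := hFun_one hα ▸ hmono hd.le (mem_Ici.2 zero_le_one) (by linarith)
    rw [hfx, eq_comm, Int.fract_eq_iff]
    exact ⟨by linarith, by linarith, 1, by push_cast; ring⟩

end bpamR

theorem bpam_conjugate_to_rotation_general (c d : ℚ)
    (hc0 : 0 < c) (hd0 : 0 < d)
    (hcd : c + d < 1) :
    ∀ x ∈ Set.Ico (0 : ℝ) 1,
      hFun ((1 - c - d) / (c * d) : ℝ) (bpamR (c : ℝ) (d : ℝ) x) =
        Int.fract (hFun ((1 - c - d) / (c * d) : ℝ) x +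
          hFun ((1 - c - d) / (c * d) : ℝ) (d : ℝ)) :=
  fun _ ↦ hFun_bpamR (by exact_mod_cast hc0) (by exact_mod_cast hd0) (by exact_mod_cast hcd)

/-- When `c + d < 1`, the bijective two-interval PAM determined by `c` and `d` is
topologically conjugate, via `h`, to the rotation of `ℝ/ℤ` by `τ = h(d)`. -/
theorem bpam_conjugate_to_rotation (c d : ℚ)
    (hc0 : 0 < c) (hc1 : c < 1) (hd0 : 0 < d) (hd1 : d < 1)
    (hcd : c + d < 1) :
    ∀ x ∈ Set.Ico (0 : ℝ) 1,
      hFun ((1 - c - d) / (c * d) : ℝ) (bpamR (c : ℝ) (d : ℝ) x) =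
        Int.fract (hFun ((1 - c - d) / (c * d) : ℝ) x +
          hFun ((1 - c - d) / (c * d) : ℝ) (d : ℝ)) :=
  bpam_conjugate_to_rotation_general c d hc0 hd0 hcd
end

section
/- Let c, d be rationals in (0,1) with c + d < 1, let f be the bijective two-interval PAM determined by c and d, and let α = (1−c−d)/(c·d). Then for all rationals x0, t ∈ [0,1): there exists n : ℕ with f^[n] x0 = t if and only if there exist n, m : ℕ with (α + 1)^m = ((α·x0 + 1)/(α·t + 1)) · (α·d + 1)^n. -/
/-!
With `α = (1 - c - d) / (c d)`, both affine branches of the map fix the point `-1/α`, so in the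
coordinate `φ x = α x + 1` the map is multiplication by its slope: by `α d + 1 = (1 - d) / c`
on `[0, c)` and by `(α d + 1) / (α + 1) = d / (1 - c)` on `[c, 1)`. Hence
`φ (f^[n] x₀) · (α + 1)^m = φ x₀ · (α d + 1)^n`, where `m` counts the visits to `[c, 1)`.
Since `φ` maps `[0, 1)` into `[1, α + 1)` and `α + 1 > 1`, a number has at most one
representation `a (α + 1)^p` with `a ∈ [1, α + 1)`, which turns the exponential equation back
into `φ (f^[n] x₀) = φ t`.
-/

/-- The bijective two-interval PAM determined by `c, d ∈ (0,1)`, as a map `ℚ → ℚ`: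
it sends `[0,c)` onto `[d,1)` and `[c,1)` onto `[0,d)`. -/
def bpamQ (c d : ℚ) (x : ℚ) : ℚ :=
  if 0 ≤ x ∧ x < c then (1 - d) / c * x + d
  else if c ≤ x ∧ x < 1 then d / (1 - c) * x - c * d / (1 - c)
  else 0

open Set

def bpamAlpha (c d : ℚ) : ℚ := (1 - c - d) / (c * d)

section Mantissa

variable {K : Type*} [Field K] [LinearOrder K] [IsStrictOrderedRing K]

theorem mul_add_one_mem_Ico {α x : K} (hα : 0 < α) (hx : x ∈ Ico 0 1) :
    α * x + 1 ∈ Ico 1 (α + 1) :=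
  ⟨by nlinarith [hx.1], by nlinarith [hx.2]⟩

theorem mul_pow_lt_mul_pow_of_lt {A a b : K} {p q : ℕ} (hA : 1 < A) (ha : a < A) (hb : 1 ≤ b)
    (hpq : p < q) : a * A ^ p < b * A ^ q :=
  calc a * A ^ p < A * A ^ p := mul_lt_mul_of_pos_right ha (by positivity)
    _ = A ^ (p + 1) := (pow_succ' A p).symm
    _ ≤ A ^ q := pow_le_pow_right₀ hA.le hpq
    _ ≤ b * A ^ q := le_mul_of_one_le_left (by positivity) hb

theorem eq_of_mul_pow_eq_mul_pow {A a b : K} {p q : ℕ} (hA : 1 < A) (ha : a ∈ Ico 1 A)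
    (hb : b ∈ Ico 1 A) (h : a * A ^ p = b * A ^ q) : a = b := by
  rcases lt_trichotomy p q with hpq | rfl | hqp
  · exact absurd h (mul_pow_lt_mul_pow_of_lt hA ha.2 hb.1 hpq).ne
  · exact mul_right_cancel₀ (pow_pos (by linarith) p).ne' h
  · exact absurd h.symm (mul_pow_lt_mul_pow_of_lt hA hb.2 ha.1 hqp).ne

end Mantissa

section BPAM

variable {c d x : ℚ}

theorem bpamQ_of_lt (hx0 : 0 ≤ x) (hxc : x < c) : bpamQ c d x = (1 - d) / c * x + d := by
  simp [bpamQ, hx0, hxc]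

theorem bpamQ_of_le (hcx : c ≤ x) (hx1 : x < 1) :
    bpamQ c d x = d / (1 - c) * x - c * d / (1 - c) := by
  simp [bpamQ, hcx, hx1, not_lt.2 hcx]

theorem bpamQ_mapsTo (hc0 : 0 < c) (hc1 : c < 1) (hd0 : 0 < d) (hd1 : d < 1) :
    MapsTo (bpamQ c d) (Ico 0 1) (Ico 0 1) := by
  rintro x ⟨hx0, hx1⟩
  rcases lt_or_ge x c with hxc | hcx
  · have hs : 0 < (1 - d) / c := div_pos (by linarith) hc0
    have hsc : (1 - d) / c * c = 1 - d := div_mul_cancel₀ _ hc0.ne'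
    rw [bpamQ_of_lt hx0 hxc]
    constructor <;> nlinarith [mul_lt_mul_of_pos_left hxc hs]
  · have hs : 0 < d / (1 - c) := div_pos hd0 (by linarith)
    have hs1 : d / (1 - c) * (1 - c) = d := div_mul_cancel₀ _ (by linarith)
    have hsub : d / (1 - c) * x - c * d / (1 - c) = d / (1 - c) * (x - c) := by ring
    rw [bpamQ_of_le hcx hx1, hsub]
    constructor <;> nlinarith [mul_lt_mul_of_pos_left (sub_lt_sub_right hx1 c) hs]

theorem bpamAlpha_mul_bpamQ_of_lt (hc0 : 0 < c) (hd0 : 0 < d) (hx0 : 0 ≤ x) (hxc : x < c) :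
    bpamAlpha c d * bpamQ c d x + 1 = (bpamAlpha c d * d + 1) * (bpamAlpha c d * x + 1) := by
  rw [bpamQ_of_lt hx0 hxc, bpamAlpha]
  field_simp
  ring

theorem bpamAlpha_mul_bpamQ_of_le (hc0 : 0 < c) (hc1 : c < 1) (hd0 : 0 < d) (hcx : c ≤ x)
    (hx1 : x < 1) :
    (bpamAlpha c d * bpamQ c d x + 1) * (bpamAlpha c d + 1) =
      (bpamAlpha c d * d + 1) * (bpamAlpha c d * x + 1) := by
  have : 1 - c ≠ 0 := by linarith
  rw [bpamQ_of_le hcx hx1, bpamAlpha]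
  field_simp
  ring

theorem exists_bpamAlpha_mul_bpamQ_mul_pow (hc0 : 0 < c) (hc1 : c < 1) (hd0 : 0 < d)
    (hx : x ∈ Ico 0 1) :
    ∃ e : ℕ, (bpamAlpha c d * bpamQ c d x + 1) * (bpamAlpha c d + 1) ^ e =
      (bpamAlpha c d * x + 1) * (bpamAlpha c d * d + 1) := by
  rcases lt_or_ge x c with hxc | hcx
  · exact ⟨0, by rw [pow_zero, mul_one, bpamAlpha_mul_bpamQ_of_lt hc0 hd0 hx.1 hxc, mul_comm]⟩
  · exact ⟨1, by rw [pow_one, bpamAlpha_mul_bpamQ_of_le hc0 hc1 hd0 hcx hx.2, mul_comm]⟩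

theorem exists_bpamAlpha_mul_iterate_mul_pow (hc0 : 0 < c) (hc1 : c < 1) (hd0 : 0 < d)
    (hd1 : d < 1) (hx : x ∈ Ico 0 1) (n : ℕ) :
    ∃ m : ℕ, (bpamAlpha c d * (bpamQ c d)^[n] x + 1) * (bpamAlpha c d + 1) ^ m =
      (bpamAlpha c d * x + 1) * (bpamAlpha c d * d + 1) ^ n := by
  induction n with
  | zero => exact ⟨0, by simp⟩
  | succ n ih =>
    obtain ⟨m, hm⟩ := ih
    obtain ⟨e, he⟩ := exists_bpamAlpha_mul_bpamQ_mul_pow hc0 hc1 hd0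
      ((bpamQ_mapsTo hc0 hc1 hd0 hd1).iterate n hx)
    refine ⟨m + e, ?_⟩
    rw [Function.iterate_succ_apply', pow_add, pow_succ]
    linear_combination (bpamAlpha c d + 1) ^ m * he + (bpamAlpha c d * d + 1) * hm

end BPAM

/-- Reachability for the bijective two-interval PAM with `c + d < 1` is equivalent to
the solvability of the exponential Diophantine equation
`(α+1)^m = ((α x₀ + 1)/(α t + 1)) (α d + 1)^n` where `α = (1-c-d)/(cd)`. -/
theorem bpam_reachability_iff_exponential_equation (c d : ℚ)
    (hc0 : 0 < c) (hc1 : c < 1) (hd0 : 0 < d) (hd1 : d < 1)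
    (hcd : c + d < 1)
    (x0 t : ℚ) (hx0 : x0 ∈ Set.Ico (0 : ℚ) 1) (ht : t ∈ Set.Ico (0 : ℚ) 1) :
    (∃ n : ℕ, (bpamQ c d)^[n] x0 = t) ↔
      (∃ n m : ℕ,
        ((1 - c - d) / (c * d) + 1) ^ m =
          (((1 - c - d) / (c * d)) * x0 + 1) / (((1 - c - d) / (c * d)) * t + 1) *
            (((1 - c - d) / (c * d)) * d + 1) ^ n) := by
  have hα : 0 < bpamAlpha c d := div_pos (by linarith) (by positivity)
  have hφt := mul_add_one_mem_Ico hα ht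
  have hφt0 : bpamAlpha c d * t + 1 ≠ 0 := by linarith [hφt.1]
  rw [show (1 - c - d) / (c * d) = bpamAlpha c d from rfl]
  simp only [div_mul_eq_mul_div, eq_div_iff hφt0]
  constructor
  · rintro ⟨n, rfl⟩
    obtain ⟨m, hm⟩ := exists_bpamAlpha_mul_iterate_mul_pow hc0 hc1 hd0 hd1 hx0 n
    exact ⟨n, m, by linear_combination hm⟩
  · rintro ⟨n, m, h⟩
    obtain ⟨m', hm'⟩ := exists_bpamAlpha_mul_iterate_mul_pow hc0 hc1 hd0 hd1 hx0 n
    have hφn := mul_add_one_mem_Ico hα ((bpamQ_mapsTo hc0 hc1 hd0 hd1).iterate n hx0)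
    have hφ : bpamAlpha c d * (bpamQ c d)^[n] x0 + 1 = bpamAlpha c d * t + 1 :=
      eq_of_mul_pow_eq_mul_pow (p := m') (q := m) (by linarith) hφn hφt
        (by linear_combination hm' - h)
    exact ⟨n, mul_left_cancel₀ hα.ne' (add_right_cancel hφ)⟩
end

section
/- For all rationals q1, q2 with q1 > 1 and q2 > 1, the real number Real.log q1 / Real.log q2 is rational if and only if there exist natural numbers a, b with 0 < a, 0 < b, and q1^b = q2^a. -/
open Real

lemma Real.exists_rat_eq_iff_exists_nat_div_of_pos {t : ℝ} (ht : 0 < t) :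
    (∃ r : ℚ, t = r) ↔ ∃ a b : ℕ, 0 < a ∧ 0 < b ∧ t = a / b := by
  constructor
  · rintro ⟨r, rfl⟩
    have hnum : 0 < r.num := Rat.num_pos.mpr (by exact_mod_cast ht)
    refine ⟨r.num.toNat, r.den, by omega, r.pos, ?_⟩
    have hcast : ((r.num.toNat : ℕ) : ℝ) = r.num := by exact_mod_cast Int.toNat_of_nonneg hnum.le
    rw [Rat.cast_def, hcast]
  · rintro ⟨a, b, -, -, rfl⟩
    exact ⟨a / b, by push_cast; rfl⟩

lemma Real.pow_eq_pow_iff_mul_log_eq_mul_log {x y : ℝ} (hx : 0 < x) (hy : 0 < y) (a b : ℕ) :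
    x ^ b = y ^ a ↔ b * log x = a * log y := by
  rw [← log_pow, ← log_pow]
  exact (log_injOn_pos.eq_iff (pow_pos hx b) (pow_pos hy a)).symm

lemma Real.exists_rat_log_div_log_eq_iff {x y : ℝ} (hx : 1 < x) (hy : 1 < y) :
    (∃ r : ℚ, log x / log y = r) ↔ ∃ a b : ℕ, 0 < a ∧ 0 < b ∧ x ^ b = y ^ a := by
  have hlx := log_pos hx
  have hly := log_pos hy
  rw [exists_rat_eq_iff_exists_nat_div_of_pos (div_pos hlx hly)]
  refine exists₂_congr fun a b => and_congr_right fun _ => and_congr_right fun _ => ?_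
  rw [pow_eq_pow_iff_mul_log_eq_mul_log (by linarith) (by linarith),
    div_eq_div_iff hly.ne' (by positivity), mul_comm]

/-- For rationals `q1, q2 > 1`, the ratio `log q1 / log q2` is rational if and only if
`q1^b = q2^a` for some positive naturals `a, b`. -/
theorem log_ratio_rational_iff (q1 q2 : ℚ) (h1 : 1 < q1) (h2 : 1 < q2) :
    (∃ r : ℚ, Real.log (q1 : ℝ) / Real.log (q2 : ℝ) = (r : ℝ)) ↔
      ∃ a b : ℕ, 0 < a ∧ 0 < b ∧ q1 ^ b = q2 ^ a := by
  rw [Real.exists_rat_log_div_log_eq_iff (by exact_mod_cast h1) (by exact_mod_cast h2)]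
  norm_cast
end

section
/- Let f : ℚ → ℚ be defined by f(x) = (4/3)·x if 0 ≤ x < 1/2, f(x) = (4/3)·x − 1/3 if 1/2 ≤ x < 1, and f(x) = 0 otherwise. Then the orbit {f^[n] (1/5) : n ∈ ℕ} is an infinite set. -/
/-!
The orbit stays in `[0, 1)`, where both branches of `fExp` lower the `3`-adic valuation by exactly
one as soon as it is negative: the factor `4/3` contributes `-1`, and the shift by `-1/3`, of
valuation `-1`, is then dominated by the ultrametric inequality. Since `v₃(1/5) = 0` and the first
step takes the branch `4/3 · x`, the `n`-th iterate has valuation `-n`, so the iterates are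
pairwise distinct.
-/

/-- The expanding two-interval PAM `f(x) = (4/3)x` on `[0,1/2)`,
`f(x) = (4/3)x - 1/3` on `[1/2,1)`, and `0` otherwise. -/
def fExp (x : ℚ) : ℚ :=
  if 0 ≤ x ∧ x < 1 / 2 then 4 / 3 * x
  else if 1 / 2 ≤ x ∧ x < 1 then 4 / 3 * x - 1 / 3
  else 0

open Set

lemma fExp_mapsTo_Ico : MapsTo fExp (Ico 0 1) (Ico 0 1) := by
  rintro x ⟨hx₀, hx₁⟩
  unfold fExp
  split_ifs with hlow hhigh
  · constructor <;> linarith [hlow.2]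
  · constructor <;> linarith [hhigh.1]
  · exact absurd ⟨not_lt.mp (fun h => hlow ⟨hx₀, h⟩), hx₁⟩ hhigh

lemma padicValRat_four_div_three_mul {x : ℚ} (hx : x ≠ 0) :
    padicValRat 3 (4 / 3 * x) = padicValRat 3 x - 1 := by
  have h4 : padicValRat 3 4 = 0 := by
    rw [show (4 : ℚ) = (4 : ℕ) by norm_num, padicValRat.of_nat, padicValNat.eq_zero_of_not_dvd]
    <;> norm_num
  have h3 : padicValRat 3 3 = 1 := by exact_mod_cast padicValRat.self (p := 3) (by norm_num)
  rw [padicValRat.mul (by norm_num) hx, padicValRat.div (by norm_num) (by norm_num), h4, h3]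
  ring

lemma padicValRat_sub_one_div_three {y : ℚ} (hy : padicValRat 3 y < -1) :
    padicValRat 3 (y - 1 / 3) = padicValRat 3 y := by
  have hthird : padicValRat 3 (-(1 / 3)) = -1 := by
    rw [padicValRat.neg, one_div, padicValRat.inv]
    exact_mod_cast congrArg Neg.neg (padicValRat.self (p := 3) (by norm_num))
  have hy₀ : y ≠ 0 := by rintro rfl; simp at hy
  have hsub : y - 1 / 3 ≠ 0 := by
    intro h
    rw [sub_eq_zero.mp h, ← neg_neg (1 / 3 : ℚ), padicValRat.neg, hthird] at hy
    exact hy.false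
  rw [sub_eq_add_neg] at hsub ⊢
  exact padicValRat.add_eq_of_lt hsub hy₀ (by norm_num) (hthird ▸ hy)

lemma padicValRat_fExp {x : ℚ} (hx : x ∈ Ico 0 1) (hv : padicValRat 3 x < 0) :
    padicValRat 3 (fExp x) = padicValRat 3 x - 1 := by
  have hx₀ : x ≠ 0 := by rintro rfl; simp at hv
  unfold fExp
  split_ifs with hlow hhigh
  · exact padicValRat_four_div_three_mul hx₀
  · rw [padicValRat_sub_one_div_three, padicValRat_four_div_three_mul hx₀]
    rw [padicValRat_four_div_three_mul hx₀]
    linarith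
  · exact absurd ⟨not_lt.mp (fun h => hlow ⟨hx.1, h⟩), hx.2⟩ hhigh

lemma padicValRat_iterate_fExp {x : ℚ} (hx : x ∈ Ico 0 1) (hv : padicValRat 3 x < 0) (n : ℕ) :
    padicValRat 3 (fExp^[n] x) = padicValRat 3 x - n := by
  induction n with
  | zero => simp
  | succ n ih =>
    rw [Function.iterate_succ_apply', padicValRat_fExp (fExp_mapsTo_Ico.iterate n hx) (by omega),
      ih]
    push_cast
    ring

lemma padicValRat_one_fifth : padicValRat 3 (1 / 5) = 0 := by
  rw [one_div, padicValRat.inv, show (5 : ℚ) = (5 : ℕ) by norm_num, padicValRat.of_nat,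
    padicValNat.eq_zero_of_not_dvd (by norm_num)]
  rfl

lemma padicValRat_iterate_fExp_one_fifth (n : ℕ) :
    padicValRat 3 (fExp^[n] (1 / 5)) = -n := by
  cases n with
  | zero => simpa using padicValRat_one_fifth
  | succ n =>
    have hfifth : (1 / 5 : ℚ) ∈ Ico 0 1 := by norm_num
    have hfirst : padicValRat 3 (fExp (1 / 5)) = -1 := by
      rw [fExp, if_pos (by norm_num), padicValRat_four_div_three_mul (by norm_num),
        padicValRat_one_fifth]
      rfl
    rw [Function.iterate_succ_apply, padicValRat_iterate_fExp (fExp_mapsTo_Ico hfifth)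
      (by omega) n, hfirst]
    push_cast
    ring

/-- The orbit of `1/5` under `fExp` is infinite. -/
theorem fExp_orbit_infinite :
    (Set.range fun n : ℕ => fExp^[n] (1 / 5)).Infinite := by
  refine Set.infinite_range_of_injective fun m n h => ?_
  simpa only [padicValRat_iterate_fExp_one_fifth, neg_inj, Nat.cast_inj]
    using congrArg (padicValRat 3) h
end

section
/- Let f : ℝ → ℝ be an expanding PAM: there exist ℓ ≥ 1, rationals 0 = c₀ < c₁ < ... < c_ℓ = 1, and rationals a₁, b₁, ..., a_ℓ, b_ℓ with aₖ > 1 for every k, such that f(x) = aₖ·x + bₖ for all x ∈ [c_{k−1}, c_k) and each k in 1..ℓ, and f maps [0,1) into [0,1). Then for every x₀ ∈ [0,1), either the orbit O = {f^[n] x₀ : n ∈ ℕ} is a finite set, or the set of accumulation points of O (points p ∈ ℝ such that every open neighbourhood of p contains a point of O different from p) is infinite. -/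
open Set Filter Function Metric Topology Bornology

/-!
If the orbit `x` is infinite but its set `A` of accumulation points is finite, then for every
`ε > 0` the orbit eventually stays in the `ε`-thickening of `A` and outside `A`. At every point of
the domain the map agrees with one of finitely many expanding similarities `g i` of ratio `r i`
(for a PAM, the affine branches, used on all of `ℝ`). If `x n` is `ε`-close to `p ∈ A`, then
`x (n + 1) = g i (x n)` is `r i * ε`-close to `g i p`; for `ε` small no point of `A` other than
`g i p` is `ε`-close to `x (n + 1)`, and `dist (x (n + 1)) (g i p) = r i * dist (x n) p`. So the
distance to `A` grows geometrically while staying below `ε`, forcing `x n ∈ A`.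
-/

theorem Function.injective_iterate_of_infinite_range {α : Type*} {f : α → α} {x : α}
    (h : (range fun n => f^[n] x).Infinite) : Injective fun n => f^[n] x := by
  refine Injective.of_lt_imp_ne fun m n hmn heq => h ?_
  have hper : IsPeriodicPt f (n - m) (f^[m] x) := by
    rw [IsPeriodicPt, IsFixedPt, ← iterate_add_apply, Nat.sub_add_cancel hmn.le]
    exact heq.symm
  refine ((finite_Iio n).image fun k => f^[k] x).subset ?_
  rintro _ ⟨k, rfl⟩
  rcases lt_or_ge k m with hk | hk
  · exact ⟨k, hk.trans hmn, rfl⟩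
  · refine ⟨(k - m) % (n - m) + m, ?_, ?_⟩
    · have := Nat.mod_lt (k - m) (Nat.sub_pos_of_lt hmn)
      simp only [mem_Iio]
      omega
    · simp only
      rw [iterate_add_apply, hper.iterate_mod_apply, ← iterate_add_apply, Nat.sub_add_cancel hk]

theorem eventually_mem_of_setOf_accPt_subset {X : Type*} [TopologicalSpace X] {x : ℕ → X}
    (hx : Injective x) {K : Set X} (hK : IsCompact K) (hxK : ∀ n, x n ∈ K) {U : Set X}
    (hU : IsOpen U) (hAU : {p | AccPt p (𝓟 (range x))} ⊆ U) : ∀ᶠ n in atTop, x n ∈ U := by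
  rw [← Nat.cofinite_eq_atTop, eventually_cofinite]
  refine Set.not_infinite.1 fun hS => ?_
  obtain ⟨p, -, hp⟩ := (hS.image hx.injOn).exists_accPt_of_subset_isCompact hK
    (image_subset_iff.2 fun n _ => hxK n)
  have hpU : p ∈ U := hAU (hp.mono (principal_mono.2 (image_subset_range _ _)))
  have hclosure : closure (x '' {n | x n ∉ U}) ⊆ Uᶜ :=
    closure_minimal (image_subset_iff.2 fun _ hn => hn) hU.isClosed_compl
  exact hclosure (mem_closure_iff_clusterPt.2 hp.clusterPt) hpU

theorem exists_mem_Ico_sub_one_of_le_of_lt {α : Type*} [LinearOrder α] {c : ℕ → α} {y : α}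
    {ℓ : ℕ} (h0 : c 0 ≤ y) (hℓ : y < c ℓ) : ∃ k ∈ Finset.Icc 1 ℓ, y ∈ Ico (c (k - 1)) (c k) := by
  classical
  have hex : ∃ k, y < c k := ⟨ℓ, hℓ⟩
  have hk0 : Nat.find hex ≠ 0 := fun h => (h ▸ Nat.find_spec hex).not_ge h0
  exact ⟨Nat.find hex, Finset.mem_Icc.2 ⟨Nat.one_le_iff_ne_zero.2 hk0, Nat.find_min' hex hℓ⟩,
    not_lt.1 (Nat.find_min hex (by omega)), Nat.find_spec hex⟩

section Expanding

variable {X ι : Type*} [MetricSpace X]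

theorem dist_apply_le_of_dist_lt {g : X → X} {r ε : ℝ} (hr : 0 ≤ r)
    (hg : ∀ y z, dist (g y) (g z) = r * dist y z) {y p q : X} (hyp : dist y p < ε)
    (hyq : dist (g y) q < ε) : dist (g p) q ≤ (r + 1) * ε :=
  calc dist (g p) q ≤ dist (g p) (g y) + dist (g y) q := dist_triangle _ _ _
    _ ≤ r * ε + ε := by
      rw [hg, dist_comm]
      gcongr
    _ = (r + 1) * ε := by ring

theorem exists_pos_forall_mul_lt_dist (I : Finset ι) {A : Set X} (hA : A.Finite)
    (g : ι → X → X) (r : ι → ℝ) :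
    ∃ ε > 0, ∀ i ∈ I, ∀ p ∈ A, ∀ q ∈ A, g i p ≠ q → (r i + 1) * ε < dist (g i p) q := by
  have hsmall : ∀ i p q, ∀ᶠ ε in 𝓝 (0 : ℝ), g i p ≠ q → (r i + 1) * ε < dist (g i p) q := by
    intro i p q
    by_cases h : g i p = q
    · exact Eventually.of_forall fun _ h' => absurd h h'
    · have : Tendsto (fun ε => (r i + 1) * ε) (𝓝 0) (𝓝 0) :=
        (continuous_const_mul (r i + 1)).tendsto' 0 0 (mul_zero _)
      exact (this.eventually (gt_mem_nhds (dist_pos.2 h))).mono fun _ h' _ => h'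
  have hall : ∀ᶠ ε in 𝓝 (0 : ℝ), ∀ i ∈ I, ∀ p ∈ A, ∀ q ∈ A,
      g i p ≠ q → (r i + 1) * ε < dist (g i p) q :=
    (eventually_all_finset I).2 fun i _ => (eventually_all_finite hA).2 fun p _ =>
      (eventually_all_finite hA).2 fun q _ => hsmall i p q
  have hpos : Ioi (0 : ℝ) ∈ 𝓝[>] 0 := self_mem_nhdsWithin
  exact ((hall.filter_mono nhdsWithin_le_nhds).and hpos).exists.imp fun ε h => ⟨h.2, h.1⟩

theorem eq_of_forall_dist_lt_expanding {x : ℕ → X} {A : Set X} {ε c : ℝ} (hc : 1 < c) {N : ℕ}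
    (hstep : ∀ n ≥ N, ∀ p ∈ A, dist (x n) p < ε →
      ∃ q ∈ A, dist (x (n + 1)) q < ε ∧ c * dist (x n) p ≤ dist (x (n + 1)) q)
    {p : X} (hp : p ∈ A) (hNp : dist (x N) p < ε) : x N = p := by
  have hgrow : ∀ k, ∃ q ∈ A,
      dist (x (N + k)) q < ε ∧ c ^ k * dist (x N) p ≤ dist (x (N + k)) q := by
    intro k
    induction k with
    | zero => exact ⟨p, hp, hNp, by simp⟩
    | succ k ih =>
      obtain ⟨q, hq, hlt, hle⟩ := ih
      obtain ⟨q', hq', hlt', hle'⟩ := hstep (N + k) (Nat.le_add_right N k) q hq hlt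
      refine ⟨q', hq', hlt', ?_⟩
      calc c ^ (k + 1) * dist (x N) p = c * (c ^ k * dist (x N) p) := by ring
        _ ≤ c * dist (x (N + k)) q := by gcongr
        _ ≤ dist (x (N + k + 1)) q' := hle'
  by_contra hne
  have hd : 0 < dist (x N) p := dist_pos.2 hne
  obtain ⟨k, hk⟩ := pow_unbounded_of_one_lt (ε / dist (x N) p) hc
  obtain ⟨q, -, hlt, hle⟩ := hgrow k
  rw [div_lt_iff₀ hd] at hk
  linarith

theorem infinite_setOf_accPt_orbit_of_piecewise_expanding [ProperSpace X] {f : X → X}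
    {D : Set X} (hD : IsBounded D) (hfD : MapsTo f D D) (I : Finset ι) {g : ι → X → X} {r : ι → ℝ}
    (hr : ∀ i ∈ I, 1 < r i) (hg : ∀ i ∈ I, ∀ y z, dist (g i y) (g i z) = r i * dist y z)
    (hf : ∀ y ∈ D, ∃ i ∈ I, f y = g i y) {x₀ : X} (hx₀ : x₀ ∈ D)
    (hinf : (range fun n => f^[n] x₀).Infinite) :
    {p | AccPt p (𝓟 (range fun n => f^[n] x₀))}.Infinite := by
  set x : ℕ → X := fun n => f^[n] x₀
  set A := {p | AccPt p (𝓟 (range x))}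
  intro hA
  have hxD : ∀ n, x n ∈ D := fun n => hfD.iterate n hx₀
  have hinj : Injective x := injective_iterate_of_infinite_range hinf
  obtain ⟨c, hc, hcr⟩ : ∃ c, 1 < c ∧ ∀ i ∈ I, c ≤ r i := by
    have hall : ∀ᶠ c in 𝓝[>] 1, ∀ i ∈ I, c ≤ r i := (eventually_all_finset I).2
      fun i hi => nhdsWithin_le_nhds (eventually_le_nhds (hr i hi))
    have hgt : Ioi (1 : ℝ) ∈ 𝓝[>] 1 := self_mem_nhdsWithin
    exact (hall.and hgt).exists.imp fun c h => ⟨h.2, h.1⟩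
  obtain ⟨ε, hε, hεA⟩ := exists_pos_forall_mul_lt_dist I hA g r
  have hnear : ∀ᶠ n in atTop, x n ∈ thickening ε A :=
    eventually_mem_of_setOf_accPt_subset hinj hD.isCompact_closure
      (fun n => subset_closure (hxD n)) isOpen_thickening (self_subset_thickening hε A)
  have hnotin : ∀ᶠ n in atTop, x n ∉ A :=
    Nat.cofinite_eq_atTop ▸ (hA.preimage hinj.injOn).eventually_cofinite_notMem
  obtain ⟨N, hN⟩ := (hnear.and hnotin).exists_forall_of_atTop
  obtain ⟨p, hp, hNp⟩ := mem_thickening_iff.1 (hN N le_rfl).1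
  suffices hstep : ∀ n ≥ N, ∀ p ∈ A, dist (x n) p < ε →
      ∃ q ∈ A, dist (x (n + 1)) q < ε ∧ c * dist (x n) p ≤ dist (x (n + 1)) q by
    have hNA : x N = p := eq_of_forall_dist_lt_expanding hc hstep hp hNp
    exact (hN N le_rfl).2 (hNA ▸ hp)
  intro n hn p hp hnp
  obtain ⟨i, hi, hfi⟩ := hf _ (hxD n)
  obtain ⟨q, hq, hnq⟩ := mem_thickening_iff.1 (hN (n + 1) (by omega)).1
  have hx : x (n + 1) = g i (x n) := by simp only [x, iterate_succ_apply', hfi]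
  rw [hx] at hnq ⊢
  have hqp : g i p = q := by
    by_contra hne
    exact (hεA i hi p hp q hq hne).not_ge
      (dist_apply_le_of_dist_lt (by linarith [hr i hi]) (hg i hi) hnp hnq)
  refine ⟨q, hq, hnq, ?_⟩
  rw [← hqp, hg i hi]
  exact mul_le_mul_of_nonneg_right (hcr i hi) dist_nonneg

end Expanding

theorem expanding_pam_finite_or_infinitely_many_accumulation_points_general
    (f : ℝ → ℝ) (ℓ : ℕ)
    (cs : ℕ → ℚ) (a b : ℕ → ℚ)
    (hc0 : cs 0 = 0) (hcl : cs ℓ = 1)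
    (hslope : ∀ k, 1 ≤ k → k ≤ ℓ → 1 < a k)
    (haff : ∀ k, 1 ≤ k → k ≤ ℓ → ∀ x : ℝ,
      (cs (k - 1) : ℝ) ≤ x → x < (cs k : ℝ) → f x = (a k : ℝ) * x + (b k : ℝ))
    (hmap : ∀ x ∈ Set.Ico (0 : ℝ) 1, f x ∈ Set.Ico (0 : ℝ) 1) :
    ∀ x0 ∈ Set.Ico (0 : ℝ) 1,
      (Set.range fun n : ℕ => f^[n] x0).Finite ∨
      {p : ℝ | AccPt p (Filter.principal (Set.range fun n : ℕ => f^[n] x0))}.Infinite := by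
  intro x0 hx0
  refine or_iff_not_imp_left.2 fun hinf => ?_
  have hslope' : ∀ k ∈ Finset.Icc 1 ℓ, (1 : ℝ) < a k := fun k hk => by
    obtain ⟨h1, h2⟩ := Finset.mem_Icc.1 hk
    exact_mod_cast hslope k h1 h2
  have hdist : ∀ k ∈ Finset.Icc 1 ℓ, ∀ y z : ℝ,
      dist ((a k : ℝ) * y + b k) (a k * z + b k) = a k * dist y z := fun k hk y z => by
    rw [Real.dist_eq, Real.dist_eq, add_sub_add_right_eq_sub, ← mul_sub, abs_mul,
      abs_of_pos (zero_lt_one.trans (hslope' k hk))]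
  have hbranch : ∀ y ∈ Ico (0 : ℝ) 1, ∃ k ∈ Finset.Icc 1 ℓ, f y = a k * y + b k := by
    intro y hy
    obtain ⟨k, hk, hyk⟩ := exists_mem_Ico_sub_one_of_le_of_lt (c := fun k => (cs k : ℝ))
      (ℓ := ℓ) (by simpa [hc0] using hy.1) (by simpa [hcl] using hy.2)
    obtain ⟨h1, h2⟩ := Finset.mem_Icc.1 hk
    exact ⟨k, hk, haff k h1 h2 y hyk.1 hyk.2⟩
  exact infinite_setOf_accPt_orbit_of_piecewise_expanding (isBounded_Ico 0 1) hmap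
    (Finset.Icc 1 ℓ) (g := fun k y => a k * y + b k) hslope' hdist hbranch hx0 hinf

/-- For an expanding PAM (all slopes `> 1`) mapping `[0,1)` into itself, every orbit
is either finite or has infinitely many accumulation points. -/
theorem expanding_pam_finite_or_infinitely_many_accumulation_points
    (f : ℝ → ℝ) (ℓ : ℕ) (hℓ : 1 ≤ ℓ)
    (cs : ℕ → ℚ) (a b : ℕ → ℚ)
    (hc0 : cs 0 = 0) (hcl : cs ℓ = 1)
    (hmono : ∀ k, k < ℓ → cs k < cs (k + 1))
    (hslope : ∀ k, 1 ≤ k → k ≤ ℓ → 1 < a k)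
    (haff : ∀ k, 1 ≤ k → k ≤ ℓ → ∀ x : ℝ,
      (cs (k - 1) : ℝ) ≤ x → x < (cs k : ℝ) → f x = (a k : ℝ) * x + (b k : ℝ))
    (hmap : ∀ x ∈ Set.Ico (0 : ℝ) 1, f x ∈ Set.Ico (0 : ℝ) 1) :
    ∀ x0 ∈ Set.Ico (0 : ℝ) 1,
      (Set.range fun n : ℕ => f^[n] x0).Finite ∨
      {p : ℝ | AccPt p (Filter.principal (Set.range fun n : ℕ => f^[n] x0))}.Infinite :=
  expanding_pam_finite_or_infinitely_many_accumulation_points_general f ℓ cs a b hc0 hcl hslope haff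
    hmap
end
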